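/- In BDS_hs with delayed removal: if vertex u at the top of the stack has all neighbors visited and is popped, then the vertex p now at the top of the stack is either the previous sibling of u or the parent of u in the BDS tree; moreover, in the latter case u was the first (leftmost-pushed) child of p, and all children of p have already been popped. -/

import Mathlib

/-- Stack operations: push a vertex on top, or pop the top. -/
inductive StackOp (V : Type*) where
  | push (v : V) : StackOp V
  | pop : StackOp V

/-- Run a sequence of stack operations on a stack (head = top). -/
def runStack {V : Type*} : List (StackOp V) → List V → List V
  | [], s => s
  | .push v :: ops, s => runStack ops (v :: s)
  | .pop :: ops, s => runStack ops s.tail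

/-- The values pushed by a sequence of operations. -/
def pushedVals {V : Type*} : List (StackOp V) → List V
  | [] => []
  | .push v :: ops => v :: pushedVals ops
  | .pop :: ops => pushedVals ops

/-- Running any operations on a stack `s` yields some newly-pushed values on
top of a suffix of `s`. -/
theorem runStack_shape {V : Type*} (ops : List (StackOp V)) (s : List V) :
    ∃ l n, runStack ops s = l ++ s.drop n ∧ ∀ x ∈ l, x ∈ pushedVals ops := by
  induction ops generalizing s with
  | nil => exact ⟨[], 0, rfl, by simp⟩
  | cons op ops ih =>
    cases op with
    | push v =>
      obtain ⟨l, n, h, hl⟩ := ih (v :: s)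
      cases n with
      | zero =>
        refine ⟨l ++ [v], 0, ?_, ?_⟩
        · simpa [runStack] using h
        · intro x hx
          rcases List.mem_append.1 hx with hx | hx
          · exact List.mem_cons_of_mem _ (hl x hx)
          · simp at hx; simp [hx, pushedVals]
      | succ m =>
        refine ⟨l, m, ?_, fun x hx => List.mem_cons_of_mem _ (hl x hx)⟩
        simpa [runStack] using h
    | pop =>
      obtain ⟨l, n, h, hl⟩ := ih s.tail
      refine ⟨l, n + 1, ?_, hl⟩
      have : s.tail.drop n = s.drop (n + 1) := by
        rw [← List.drop_one, List.drop_drop]; ring_nf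
      rw [runStack, h, this]

/-- BDS_hs stack invariant with delayed removal: suppose expanding `p` pushed
its children `cs` above `p` (stack `cs ++ p :: rest`, `cs.head` topmost, so the
last entry of `cs` is the first-pushed child). If later, after further pushes
and pops (none of which re-push a child `u = cs[i]`), `u` is at the top of the
stack, then the entries below `u` are exactly the later-expanded siblings
`cs.drop (i+1)` followed by `p` (and the old stack). In particular, popping `u`
exposes either the next sibling `cs[i+1]`, or — when `u` was the first
(leftmost-pushed) child, i.e. `i + 1 = cs.length`, so all other children of `p`
have already been popped — the parent `p` itself. -/
theorem bds_hs_stack_invariant {V : Type*}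
    (cs : List V) (p : V) (rest : List V) (i : ℕ) (hi : i < cs.length)
    (hnodup : (cs ++ p :: rest).Nodup)
    (ops : List (StackOp V))
    (hnopush : cs.get ⟨i, hi⟩ ∉ pushedVals ops)
    (t : List V)
    (htop : runStack ops (cs ++ p :: rest) = cs.get ⟨i, hi⟩ :: t) :
    t = cs.drop (i + 1) ++ p :: rest ∧
      t.head? = (if h : i + 1 < cs.length then some (cs.get ⟨i + 1, h⟩) else some p) ∧
      (i + 1 = cs.length → t = p :: rest) := by
  set s : List V := cs ++ p :: rest with hs
  set u : V := cs.get ⟨i, hi⟩ with hu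
  obtain ⟨l, n, h, hl⟩ := runStack_shape ops s
  rw [htop] at h
  have hlnil : l = [] := by
    cases l with
    | nil => rfl
    | cons a l' =>
      exfalso
      have : a = u := by simpa using congrArg List.head? h.symm
      exact hnopush (this ▸ hl a (by simp))
  subst hlnil
  simp only [List.nil_append] at h
  have hils : i < s.length := by simp [hs]; omega
  have hns : n < s.length := by
    by_contra hc
    rw [List.drop_eq_nil_of_le (le_of_not_gt hc)] at h
    simp at h
  have hget : s.get ⟨n, hns⟩ = u := by
    have := congrArg List.head? h
    rw [List.head?_drop] at this
    simp only [List.getElem?_eq_getElem hns] at this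
    simpa using this.symm
  have hgu : s.get ⟨i, hils⟩ = u := by
    simp only [hs, hu, List.get_eq_getElem]
    exact List.getElem_append_left hi
  have hni : n = i := by
    have := (List.Nodup.get_inj_iff hnodup).1 (hget.trans hgu.symm)
    simpa using this
  subst hni
  have ht : t = s.drop (n + 1) := by
    have := congrArg List.tail h
    simpa using this
  have hdrop : s.drop (n + 1) = cs.drop (n + 1) ++ p :: rest := by
    rw [hs, List.drop_append_of_le_length (by omega)]
  have ht' : t = cs.drop (n + 1) ++ p :: rest := ht.trans hdrop
  refine ⟨ht', ?_, ?_⟩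
  · by_cases h1 : n + 1 < cs.length
    · rw [dif_pos h1, ht']
      have : cs.drop (n + 1) ≠ [] := by
        simp [List.drop_eq_nil_iff]; omega
      cases hd : cs.drop (n + 1) with
      | nil => exact absurd hd this
      | cons a l' =>
        have : a = cs.get ⟨n + 1, h1⟩ := by
          have := congrArg List.head? hd
          rw [List.head?_drop, List.getElem?_eq_getElem h1] at this
          simpa using this.symm
        simp [hd, this]
    · rw [dif_neg h1, ht']
      have : cs.drop (n + 1) = [] := List.drop_eq_nil_of_le (by omega)
      simp [this]
  · intro hlen
    rw [ht', List.drop_eq_nil_of_le hlen.ge, List.nil_append]
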